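/- arXiv:2201.09276 — 4 statements merged into one kernel-verified Lean document; each statement's English description precedes it below -/
import Mathlib

section
/- Let R be a commutative local ring and A ∈ M₂(R). Then A is strongly rad-clean if and only if A ∈ GL₂(R), or A ∈ J(M₂(R)), or tr(A) ∈ U(R) and the quadratic equation x² + x = −det(A)/tr(A)² has a root in J(R). -/
/-- `j` lies in the Jacobson radical of the corner ring `eSe` (with identity `e`):
every element of the form `e - (eye)·j` is invertible in the corner ring. -/
def MemCornerJacobson {S : Type*} [Ring S] (e j : S) : Prop :=
  ∀ y : S, ∃ s : S,
    e * s * e = s ∧ s * (e - e * y * e * j) = e ∧ (e - e * y * e * j) * s = e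

/-- `a` is strongly rad-clean: `a = e + u` with `e` idempotent, `u` a unit,
`ae = ea` and `eae ∈ J(eSe)`. -/
def IsStronglyRadClean {S : Type*} [Ring S] (a : S) : Prop :=
  ∃ e : S, IsIdempotentElem e ∧ IsUnit (a - e) ∧ a * e = e * a ∧
    MemCornerJacobson e (e * a * e)

/-!
Over a local ring an idempotent `E ∈ M₂(R)` is `0`, `1`, or of rank one (trace `1`, determinant
`0`). The first two cases give the first two alternatives, since `J(eSe) = e J(S) e` and
`J(M₂(R)) = M₂(J(R))`. A matrix commuting with a rank-one idempotent is `a E + b (1 - E)` with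
`a = tr (A E)`; then `tr A = a + b`, `det A = a b`, and the remaining rad-clean conditions say
exactly that `a ∈ J(R)` and `b` is a unit. Such a splitting exists iff `tr A` is a unit and
`x = -a / tr A` is a root in `J(R)` of `x² + x = -det A / (tr A)²`. Conversely the roots `a, b`
give back the idempotent `E = (a - b)⁻¹ (A - b)`.
-/

open Matrix

theorem isUnit_one_sub_mul_comm {S : Type*} [Ring S] {x y : S} (h : IsUnit (1 - x * y)) :
    IsUnit (1 - y * x) := by
  obtain ⟨v, hv₁, hv₂⟩ := isUnit_iff_exists.1 h
  refine isUnit_iff_exists.2 ⟨1 + y * v * x, ?_, ?_⟩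
  · calc (1 - y * x) * (1 + y * v * x) = 1 - y * x + y * ((1 - x * y) * v) * x := by noncomm_ring
      _ = 1 := by rw [hv₁]; noncomm_ring
  · calc (1 + y * v * x) * (1 - y * x) = 1 - y * x + y * (v * (1 - x * y)) * x := by noncomm_ring
      _ = 1 := by rw [hv₂]; noncomm_ring

theorem IsUnit.add_of_mem_jacobson_bot {R : Type*} [CommRing R] {u a : R} (hu : IsUnit u)
    (ha : a ∈ Ideal.jacobson (⊥ : Ideal R)) : IsUnit (u + a) := by
  obtain ⟨v, rfl⟩ := hu
  have := (Ideal.mem_jacobson_bot.1 ha ↑v⁻¹).mul v.isUnit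
  rwa [add_mul, mul_assoc, v.inv_mul, mul_one, one_mul, add_comm] at this

theorem IsLocalRing.eq_zero_or_eq_one_of_isIdempotentElem {R : Type*} [CommRing R]
    [IsLocalRing R] {e : R} (he : IsIdempotentElem e) : e = 0 ∨ e = 1 := by
  rcases IsLocalRing.isUnit_or_isUnit_one_sub_self e with hu | hu
  · exact .inr ((IsIdempotentElem.iff_eq_one_of_isUnit hu).1 he)
  · exact .inl (sub_eq_self.1 ((IsIdempotentElem.iff_eq_one_of_isUnit hu).1 he.one_sub))

theorem exists_mem_jacobson_isUnit_add_eq_mul_eq_iff {R : Type*} [CommRing R] {t d : R} :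
    (∃ a b, a ∈ Ideal.jacobson (⊥ : Ideal R) ∧ IsUnit b ∧ a + b = t ∧ a * b = d) ↔
      IsUnit t ∧ ∃ x ∈ Ideal.jacobson (⊥ : Ideal R), t ^ 2 * (x ^ 2 + x) = -d := by
  constructor
  · rintro ⟨a, b, ha, hb, rfl, rfl⟩
    obtain ⟨v, hv⟩ : IsUnit (a + b) := by simpa [add_comm] using hb.add_of_mem_jacobson_bot ha
    refine ⟨⟨v, hv⟩, -(a * ↑v⁻¹), neg_mem (Ideal.mul_mem_right _ _ ha), ?_⟩
    rw [← hv]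
    linear_combination (a ^ 2 * ((v : R) * ↑v⁻¹ + 1) - a * v) * v.mul_inv - a * hv
  · rintro ⟨ht, x, hx, heq⟩
    refine ⟨-(t * x), t * (1 + x), neg_mem (Ideal.mul_mem_left _ _ hx),
      ht.mul (isUnit_one.add_of_mem_jacobson_bot hx), by ring, by linear_combination -heq⟩

section Corner

variable {S : Type*} [Ring S] {e : S}

theorem exists_corner_inverse_iff_isUnit_one_sub (he : IsIdempotentElem e) {z : S}
    (hez : e * z = z) (hze : z * e = z) :
    (∃ s, e * s * e = s ∧ s * (e - z) = e ∧ (e - z) * s = e) ↔ IsUnit (1 - z) := by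
  constructor
  · rintro ⟨s, hs, hl, hr⟩
    have hes : e * s = s := by rw [← hs]; simp only [← mul_assoc, he.eq]
    have hse : s * e = s := by rw [← hs]; simp only [mul_assoc, he.eq]
    refine isUnit_iff_exists.2 ⟨s + (1 - e), ?_, ?_⟩
    · calc (1 - z) * (s + (1 - e)) = (e - z) * s + (s - e * s) + (1 - e - z + z * e) := by
            noncomm_ring
        _ = 1 := by rw [hr, hes, hze]; abel
    · calc (s + (1 - e)) * (1 - z) = s * (e - z) + (s - s * e) + (1 - e - z + e * z) := by
            noncomm_ring
        _ = 1 := by rw [hl, hse, hez]; abel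
  · rintro ⟨u, hu⟩
    have hleft : e - z = e * ↑u := by rw [hu, mul_sub, mul_one, hez]
    have hright : e - z = ↑u * e := by rw [hu, sub_mul, one_mul, hze]
    have hcomm : Commute e ↑u⁻¹ := Commute.units_inv_right (hleft.symm.trans hright)
    refine ⟨e * ↑u⁻¹, ?_, ?_, ?_⟩
    · simp only [mul_assoc, ← hcomm.eq]
      simp only [← mul_assoc, he.eq]
    · rw [hright, mul_assoc, ← mul_assoc _ (↑u : S), u.inv_mul, one_mul, he.eq]
    · rw [hleft, hcomm.eq, mul_assoc, u.mul_inv_cancel_left, he.eq]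

theorem memCornerJacobson_iff (he : IsIdempotentElem e) {j : S} (hej : e * j = j)
    (hje : j * e = j) : MemCornerJacobson e j ↔ ∀ y, IsUnit (1 - y * j) := by
  have hcorner : MemCornerJacobson e j ↔ ∀ y, IsUnit (1 - e * y * e * j) :=
    forall_congr' fun y => exists_corner_inverse_iff_isUnit_one_sub he
      (by simp only [← mul_assoc, he.eq]) (by rw [mul_assoc, hje])
  rw [hcorner]
  refine ⟨fun h y => ?_, fun h y => h (e * y * e)⟩
  -- `1 - (e y e) j`, `1 - j (y e)` and `1 - y j` are units together, by Jacobson's lemma.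
  have h₁ := isUnit_one_sub_mul_comm (h y)
  rw [← mul_assoc, ← mul_assoc, hje, mul_assoc] at h₁
  simpa only [mul_assoc, hej] using isUnit_one_sub_mul_comm h₁

end Corner

namespace Matrix

theorem forall_isUnit_one_sub_mul_iff {n R : Type*} [Fintype n] [DecidableEq n]
    [CommRing R] (M : Matrix n n R) :
    (∀ Y, IsUnit (1 - Y * M)) ↔ ∀ i j, M i j ∈ Ideal.jacobson (⊥ : Ideal R) := by
  have hR : ∀ x : R,
      x ∈ Ideal.jacobson (⊥ : Ideal R) ↔ x ∈ (⊥ : TwoSidedIdeal R).jacobson := fun x => by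
    simp [Ideal.mem_jacobson_iff, TwoSidedIdeal.mem_jacobson_iff]
  simp_rw [hR, ← TwoSidedIdeal.mem_matrix, TwoSidedIdeal.matrix_jacobson_bot,
    TwoSidedIdeal.mem_jacobson_iff, TwoSidedIdeal.mem_bot]
  refine ⟨fun h Y => ?_, fun h Y => ?_⟩
  · obtain ⟨Z, -, hZ⟩ := isUnit_iff_exists.1 (h (-Y))
    exact ⟨Z, by rw [← hZ]; noncomm_ring⟩
  · obtain ⟨Z, hZ⟩ := h (-Y)
    refine (isUnit_iff_isUnit_det _).2 (isUnit_det_of_left_inverse (B := Z) ?_)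
    rw [← sub_eq_zero, ← hZ]; noncomm_ring

variable {R : Type*} [CommRing R]

theorem mul_self_fin_two (M : Matrix (Fin 2) (Fin 2) R) : M * M = M.trace • M - M.det • 1 := by
  ext i j
  fin_cases i <;> fin_cases j <;>
    simp [mul_apply, Fin.sum_univ_two, trace_fin_two, det_fin_two] <;> ring

theorem mul_mul_self_fin_two_of_det_eq_zero {E : Matrix (Fin 2) (Fin 2) R} (hE : E.det = 0)
    (M : Matrix (Fin 2) (Fin 2) R) : E * M * E = (E * M).trace • E := by
  have h : E * M * E = (E * M).trace • E - E.det • M.adjugate := by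
    ext i j
    fin_cases i <;> fin_cases j <;>
      simp [mul_apply, Fin.sum_univ_two, trace_fin_two, det_fin_two, adjugate_fin_two] <;> ring
  rw [h, hE, zero_smul, sub_zero]

theorem det_one_sub_fin_two (M : Matrix (Fin 2) (Fin 2) R) :
    (1 - M).det = 1 - M.trace + M.det := by
  simp only [det_fin_two, trace_fin_two, sub_apply, one_apply_eq,
    one_apply_ne zero_ne_one, one_apply_ne one_ne_zero]
  ring

theorem det_eq_zero_of_isIdempotentElem {E : Matrix (Fin 2) (Fin 2) R} (hE : IsIdempotentElem E)
    (htr : E.trace = 1) : E.det = 0 := by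
  have h := mul_self_fin_two E
  rw [hE.eq, htr, one_smul, eq_comm, sub_eq_self] at h
  simpa using congr_fun (congr_fun h 0) 0

theorem eq_zero_or_eq_one_or_trace_eq_one_of_isIdempotentElem [IsLocalRing R]
    {E : Matrix (Fin 2) (Fin 2) R} (hE : IsIdempotentElem E) : E = 0 ∨ E = 1 ∨ E.trace = 1 := by
  have hdet : IsIdempotentElem E.det := by rw [IsIdempotentElem, ← det_mul, hE.eq]
  have hdet' : IsIdempotentElem (1 - E).det := by rw [IsIdempotentElem, ← det_mul, hE.one_sub.eq]
  rcases IsLocalRing.eq_zero_or_eq_one_of_isIdempotentElem hdet with h₀ | h₀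
  · rcases IsLocalRing.eq_zero_or_eq_one_of_isIdempotentElem hdet' with h₁ | h₁
    · rw [det_one_sub_fin_two, h₀] at h₁
      exact .inr (.inr (by linear_combination -h₁))
    · have := (IsIdempotentElem.iff_eq_one_of_isUnit ((isUnit_iff_isUnit_det _).2
        (h₁ ▸ isUnit_one))).1 hE.one_sub
      exact .inl (sub_eq_self.1 this)
  · exact .inr (.inl ((IsIdempotentElem.iff_eq_one_of_isUnit ((isUnit_iff_isUnit_det _).2
      (h₀ ▸ isUnit_one))).1 hE))

theorem mul_eq_trace_smul_of_commute {E : Matrix (Fin 2) (Fin 2) R} (hE : IsIdempotentElem E)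
    (htr : E.trace = 1) {A : Matrix (Fin 2) (Fin 2) R} (hAE : A * E = E * A) :
    A * E = (A * E).trace • E :=
  calc A * E = E * A * E := by rw [← hAE, mul_assoc, hE.eq]
    _ = (A * E).trace • E := by
      rw [mul_mul_self_fin_two_of_det_eq_zero (det_eq_zero_of_isIdempotentElem hE htr),
        trace_mul_comm]

theorem eq_smul_add_smul_one_sub_of_commute {E : Matrix (Fin 2) (Fin 2) R}
    (hE : IsIdempotentElem E) (htr : E.trace = 1) {A : Matrix (Fin 2) (Fin 2) R}
    (hAE : A * E = E * A) : A = (A * E).trace • E + (A.trace - (A * E).trace) • (1 - E) := by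
  have htr' : (1 - E).trace = 1 := by
    rw [trace_sub, htr, trace_one, Fintype.card_fin]; norm_num
  have hAE' : A * (1 - E) = (1 - E) * A := by rw [mul_sub, sub_mul, hAE, mul_one, one_mul]
  calc A = A * E + A * (1 - E) := by rw [mul_sub, mul_one, add_sub_cancel]
    _ = (A * E).trace • E + (A * (1 - E)).trace • (1 - E) :=
      congrArg₂ (· + ·) (mul_eq_trace_smul_of_commute hE htr hAE)
        (mul_eq_trace_smul_of_commute hE.one_sub htr' hAE')
    _ = _ := by rw [mul_sub, mul_one, trace_sub]

theorem det_smul_add_smul_one_sub {E : Matrix (Fin 2) (Fin 2) R} (hE : IsIdempotentElem E)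
    (htr : E.trace = 1) (a b : R) : (a • E + b • (1 - E)).det = a * b := by
  have hdet := det_eq_zero_of_isIdempotentElem hE htr
  rw [det_fin_two] at hdet ⊢
  rw [trace_fin_two] at htr
  simp only [add_apply, smul_apply, smul_eq_mul, sub_apply, one_apply_eq,
    one_apply_ne zero_ne_one, one_apply_ne one_ne_zero]
  linear_combination (a - b) ^ 2 * hdet + (a * b - b ^ 2) * htr

theorem isUnit_sub_and_memCornerJacobson_iff {E A : Matrix (Fin 2) (Fin 2) R}
    (hE : IsIdempotentElem E) (htr : E.trace = 1) {a b : R} (hA : A = a • E + b • (1 - E)) :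
    (IsUnit (A - E) ∧ A * E = E * A ∧ MemCornerJacobson E (E * A * E)) ↔
      a ∈ Ideal.jacobson (⊥ : Ideal R) ∧ IsUnit b := by
  have hAE : A * E = a • E := by
    rw [hA, add_mul, smul_mul, smul_mul, hE.eq, hE.one_sub_mul_self, smul_zero, add_zero]
  have hEA : E * A = a • E := by
    rw [hA, mul_add, Matrix.mul_smul, Matrix.mul_smul, hE.eq, hE.mul_one_sub_self, smul_zero,
      add_zero]
  have hsub : A - E = (a - 1) • E + b • (1 - E) := by rw [hA, sub_smul, one_smul]; abel
  have hentries : (∀ i j, (a • E) i j ∈ Ideal.jacobson (⊥ : Ideal R)) ↔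
      a ∈ Ideal.jacobson (⊥ : Ideal R) := by
    refine ⟨fun h => ?_, fun ha i j => Ideal.mul_mem_right _ _ ha⟩
    have htrace : (a • E).trace = a := by rw [trace_smul, htr, smul_eq_mul, mul_one]
    rw [← htrace, trace_fin_two]
    exact add_mem (h 0 0) (h 1 1)
  rw [hsub, isUnit_iff_isUnit_det, det_smul_add_smul_one_sub hE htr, hAE, hEA, smul_mul, hE.eq,
    memCornerJacobson_iff hE (by rw [Matrix.mul_smul, hE.eq]) (by rw [smul_mul, hE.eq]),
    forall_isUnit_one_sub_mul_iff, hentries, IsUnit.mul_iff]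
  refine ⟨fun ⟨⟨_, hb⟩, _, ha⟩ => ⟨ha, hb⟩,
    fun ⟨ha, hb⟩ => ⟨⟨?_, hb⟩, rfl, ha⟩⟩
  simpa [neg_add_eq_sub] using isUnit_one.neg.add_of_mem_jacobson_bot ha

theorem exists_isIdempotentElem_eq_smul_add_smul_one_sub (A : Matrix (Fin 2) (Fin 2) R)
    {α β : R} (hsum : α + β = A.trace) (hprod : α * β = A.det) (hsep : IsUnit (α - β)) :
    ∃ E, IsIdempotentElem E ∧ E.trace = 1 ∧ A = α • E + β • (1 - E) := by
  obtain ⟨c, hc⟩ : ∃ c, c * (α - β) = 1 := ⟨_, hsep.val_inv_mul⟩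
  refine ⟨c • (A - β • 1), ?_, ?_, ?_⟩
  · rw [IsIdempotentElem]
    simp only [smul_mul, Matrix.mul_smul, sub_mul, mul_sub, smul_sub, mul_one, one_mul, smul_smul]
    rw [mul_self_fin_two, ← hsum, ← hprod]
    match_scalars
    · linear_combination c * hc
    · linear_combination -c * β * hc
  · rw [trace_smul, trace_sub, trace_smul, trace_one, Fintype.card_fin, ← hsum, smul_eq_mul,
      smul_eq_mul]
    linear_combination hc
  · simp only [smul_sub, smul_smul]
    match_scalars
    · linear_combination -hc
    · linear_combination β * hc

end Matrix

theorem stmt4 {R : Type*} [CommRing R] [IsLocalRing R] (A : Matrix (Fin 2) (Fin 2) R) :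
    IsStronglyRadClean A ↔
      IsUnit A ∨ (∀ i j, A i j ∈ Ideal.jacobson (⊥ : Ideal R)) ∨
      (IsUnit A.trace ∧ ∃ x ∈ Ideal.jacobson (⊥ : Ideal R),
        A.trace ^ 2 * (x ^ 2 + x) = -A.det) := by
  constructor
  · rintro ⟨E, hE, hu, hAE, hJ⟩
    obtain rfl | rfl | htr := eq_zero_or_eq_one_or_trace_eq_one_of_isIdempotentElem hE
    · exact .inl (by simpa using hu)
    · rw [one_mul, mul_one, memCornerJacobson_iff .one (one_mul A) (mul_one A),
        forall_isUnit_one_sub_mul_iff] at hJ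
      exact .inr (.inl hJ)
    · have hA := eq_smul_add_smul_one_sub_of_commute hE htr hAE
      obtain ⟨ha, hb⟩ := (isUnit_sub_and_memCornerJacobson_iff hE htr hA).1 ⟨hu, hAE, hJ⟩
      refine .inr (.inr (exists_mem_jacobson_isUnit_add_eq_mul_eq_iff.1
        ⟨_, _, ha, hb, add_sub_cancel _ _, ?_⟩))
      rw [← det_smul_add_smul_one_sub hE htr, ← hA]
  · rintro (hA | hA | hA)
    · exact ⟨0, .zero, by simpa using hA, by simp, fun _ => ⟨0, by simp⟩⟩
    · have hJ := (forall_isUnit_one_sub_mul_iff A).2 hA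
      refine ⟨1, .one, by simpa using (hJ 1).neg, by simp, ?_⟩
      rwa [one_mul, mul_one, memCornerJacobson_iff .one (one_mul A) (mul_one A)]
    · obtain ⟨a, b, ha, hb, hsum, hprod⟩ := exists_mem_jacobson_isUnit_add_eq_mul_eq_iff.2 hA
      obtain ⟨E, hE, htr, hAE⟩ := exists_isIdempotentElem_eq_smul_add_smul_one_sub A hsum hprod
        (by simpa [neg_add_eq_sub] using hb.neg.add_of_mem_jacobson_bot ha)
      exact ⟨E, hE, (isUnit_sub_and_memCornerJacobson_iff hE htr hAE).2 ⟨ha, hb⟩⟩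
end

section
/- Let R = ℤ localized at the prime 3, and A = [[2,1],[−1,1]] ∈ M₂(R). Then A is not strongly rad-clean. -/
instance : (Ideal.span {(3 : ℤ)}).IsPrime :=
  (Ideal.span_singleton_prime (by norm_num)).mpr (by norm_num)

/-!
An idempotent `e` commuting with `A = !![2, 1; -1, 1]` is, by comparing entries, of the form
`!![b + d, b; -b, d]`; over a domain `e² = e` then forces `e = 0`, `e = 1`, or `3 * (d - d²) = 1`.
For `e = 0` the matrix `A` itself would be a unit, but `det A = 3`. For `e = 1` the element `A`
would lie in the Jacobson radical of `M₂(R)`, but `1 - E₁₁ * A = !![1, 0; 1, 0]` is singular.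
Hence a strongly rad-clean decomposition of `A` makes `3` a unit, which it is not in `ℤ_(3)`.
-/

theorem MemCornerJacobson.isUnit_one_sub_mul {S : Type*} [Ring S] {j : S}
    (h : MemCornerJacobson 1 j) (y : S) : IsUnit (1 - y * j) := by
  obtain ⟨s, -, hs, hs'⟩ := h y
  simp only [one_mul, mul_one] at hs hs'
  exact ⟨⟨_, s, hs', hs⟩, rfl⟩

section

variable {R : Type*} [CommRing R]

open Matrix

theorem Matrix.not_memCornerJacobson_one_of_apply_one_one [Nontrivial R]
    {j : Matrix (Fin 2) (Fin 2) R} (hj : j 1 1 = 1) : ¬ MemCornerJacobson 1 j := by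
  intro h
  have hdet : (1 - single 1 1 1 * j).det = 0 := by
    simp [det_fin_two, mul_apply, Fin.sum_univ_two, hj]
  exact not_isUnit_zero (hdet ▸ (isUnit_iff_isUnit_det _).mp (h.isUnit_one_sub_mul (single 1 1 1)))

theorem Matrix.entries_of_mul_comm {e : Matrix (Fin 2) (Fin 2) R}
    (hc : !![2, 1; -1, 1] * e = e * !![2, 1; -1, 1]) :
    e 0 0 = e 0 1 + e 1 1 ∧ e 1 0 = -e 0 1 := by
  have h00 := congrFun (congrFun hc 0) 0
  have h01 := congrFun (congrFun hc 0) 1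
  simp only [mul_apply, Fin.sum_univ_two, of_apply, cons_val', cons_val_zero, cons_val_one,
    cons_val_fin_one, one_mul, mul_one, mul_neg] at h00 h01
  exact ⟨by linear_combination -h01, by linear_combination h00⟩

theorem Matrix.eq_zero_or_eq_one_or_isUnit_three_of_mul_comm [IsDomain R]
    {e : Matrix (Fin 2) (Fin 2) R} (he : IsIdempotentElem e)
    (hc : !![2, 1; -1, 1] * e = e * !![2, 1; -1, 1]) :
    e = 0 ∨ e = 1 ∨ IsUnit (3 : R) := by
  obtain ⟨h00, h10⟩ := entries_of_mul_comm hc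
  rw [eta_fin_two e, h00, h10] at he ⊢
  set b := e 0 1
  set d := e 1 1
  rw [IsIdempotentElem, mul_fin_two, ← Matrix.ext_iff] at he
  have h01 := he 0 1
  have h11 := he 1 1
  simp only [of_apply, cons_val', cons_val_zero, cons_val_one, cons_val_fin_one] at h01 h11
  rcases mul_eq_zero.mp (show b * (b + 2 * d - 1) = 0 by linear_combination h01) with hb | hb
  · rcases mul_eq_zero.mp (show d * (d - 1) = 0 by linear_combination h11 + b * hb) with hd | hd
    · left
      simp [hb, hd, ← Matrix.ext_iff, Fin.forall_fin_two]
    · right; left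
      simp [hb, sub_eq_zero.mp hd, one_fin_two]
  · right; right
    exact IsUnit.of_mul_eq_one (d - d * d) (by linear_combination h11 + (b + 1 - 2 * d) * hb)

theorem isUnit_three_of_isStronglyRadClean [IsDomain R]
    (h : IsStronglyRadClean (!![2, 1; -1, 1] : Matrix (Fin 2) (Fin 2) R)) : IsUnit (3 : R) := by
  obtain ⟨e, he, hu, hc, hj⟩ := h
  rcases eq_zero_or_eq_one_or_isUnit_three_of_mul_comm he hc with rfl | rfl | h3
  · rw [sub_zero, isUnit_iff_isUnit_det, det_fin_two_of] at hu
    convert hu using 1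
    norm_num
  · rw [one_mul, mul_one] at hj
    exact absurd hj (not_memCornerJacobson_one_of_apply_one_one rfl)
  · exact h3

end

theorem Localization.AtPrime.not_isUnit_three :
    ¬ IsUnit (3 : Localization.AtPrime (Ideal.span {(3 : ℤ)})) := by
  have h := IsLocalization.AtPrime.isUnit_to_map_iff
    (Localization.AtPrime (Ideal.span {(3 : ℤ)})) (Ideal.span {(3 : ℤ)}) 3
  rw [map_ofNat] at h
  exact fun hu ↦ h.mp hu (Ideal.mem_span_singleton_self 3)

theorem stmt10 :
    ¬ IsStronglyRadClean
      (!![2, 1; -1, 1] :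
        Matrix (Fin 2) (Fin 2) (Localization.AtPrime (Ideal.span {(3 : ℤ)}))) :=
  fun h ↦ Localization.AtPrime.not_isUnit_three (isUnit_three_of_isStronglyRadClean h)
end

section
/- Let R be a commutative local ring. If A ∈ M₂(R) is strongly rad-clean, then A ∈ GL₂(R), or A ∈ J(M₂(R)), or tr(A) ∈ U(R). -/
/-! Over a local ring an idempotent `e ∈ M₂(R)` is `0`, `1`, or has trace `1`: its determinant
and, by Cayley–Hamilton, its trace are idempotents of `R`. The first two cases make `A`
invertible, resp. put `A` in `J(M₂(R)) = M₂(J(R))`. In the last case every `N` with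
`eN = N = Ne` equals `tr N • e`, so the trace identifies both corner rings `eM₂(R)e` and
`(1-e)M₂(R)(1-e)` with `R`; hence `tr A = tr(eAe) + tr((1-e)(A-e)(1-e))` is a radical element
plus a unit. -/

open Matrix

section CommRing

variable {R : Type*} [CommRing R]

theorem isUnit_add_of_mem_jacobson_bot {a b : R} (ha : a ∈ Ideal.jacobson (⊥ : Ideal R))
    (hb : IsUnit b) : IsUnit (a + b) := by
  obtain ⟨u, rfl⟩ := hb
  have h := (Ideal.mem_jacobson_bot.1 ha ↑u⁻¹).mul u.isUnit
  rwa [add_mul, mul_assoc, Units.inv_mul, mul_one, one_mul] at h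

theorem IsIdempotentElem.eq_zero_or_eq_one_of_isLocalRing [IsLocalRing R] {d : R}
    (hd : IsIdempotentElem d) : d = 0 ∨ d = 1 := by
  rcases IsLocalRing.isUnit_or_isUnit_one_sub_self d with h | h
  · exact Or.inr ((IsIdempotentElem.iff_eq_one_of_isUnit h).1 hd)
  · exact Or.inl (sub_eq_self.1 ((IsIdempotentElem.iff_eq_one_of_isUnit h).1 hd.one_sub))

theorem TwoSidedIdeal.mem_jacobson_bot_iff {x : R} :
    x ∈ (⊥ : TwoSidedIdeal R).jacobson ↔ x ∈ Ideal.jacobson (⊥ : Ideal R) := by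
  rw [TwoSidedIdeal.mem_jacobson_iff, Ideal.mem_jacobson_iff]
  simp

end CommRing

section Corner

variable {S : Type*} [Ring S] {e : S}

theorem IsIdempotentElem.mul_mul_self_of_commute (he : IsIdempotentElem e) {a : S}
    (hea : Commute e a) : e * a * e = a * e := by
  rw [hea.eq, mul_assoc, he.eq]

theorem IsIdempotentElem.mul_mul_add_mul_sub_mul_of_commute (he : IsIdempotentElem e) {a : S}
    (hea : Commute e a) : e * a * e + (1 - e) * (a - e) * (1 - e) = a := by
  have hfa : Commute (1 - e) (a - e) := ((Commute.one_left a).sub_left hea).sub_right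
    ((Commute.one_left e).sub_left (Commute.refl e))
  rw [he.mul_mul_self_of_commute hea, he.one_sub.mul_mul_self_of_commute hfa]
  simp only [mul_sub, sub_mul, mul_one, he.eq]
  abel

theorem IsIdempotentElem.mul_mul_mul_mul_inv_mul (he : IsIdempotentElem e) {u : Sˣ}
    (heu : Commute e u) : (e * u * e) * (e * ↑u⁻¹ * e) = e := by
  rw [he.mul_mul_self_of_commute heu, he.mul_mul_self_of_commute heu.units_inv_right, mul_assoc,
    ← mul_assoc e, heu.units_inv_right.eq, mul_assoc _ e, he.eq, ← mul_assoc, Units.mul_inv,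
    one_mul]

theorem MemCornerJacobson.mem_jacobson_bot {j : S} (h : MemCornerJacobson 1 j) :
    j ∈ (⊥ : TwoSidedIdeal S).jacobson := by
  refine TwoSidedIdeal.mem_jacobson_iff.2 fun y => ?_
  obtain ⟨s, -, hs, -⟩ := h (-y)
  refine ⟨s, ?_⟩
  rw [TwoSidedIdeal.mem_bot, ← hs]
  noncomm_ring

end Corner

namespace Matrix

theorem apply_mem_jacobson_bot {n S : Type*} [Fintype n] [DecidableEq n] [Ring S]
    {A : Matrix n n S} (hA : A ∈ (⊥ : TwoSidedIdeal (Matrix n n S)).jacobson) (i j : n) :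
    A i j ∈ (⊥ : TwoSidedIdeal S).jacobson := by
  rw [← TwoSidedIdeal.matrix_jacobson_bot, TwoSidedIdeal.mem_matrix] at hA
  exact hA i j

variable {R : Type*} [CommRing R]

theorem mul_add_mul_swap_fin_two (M N : Matrix (Fin 2) (Fin 2) R) :
    M * N + N * M = M.trace • N + N.trace • M + ((M * N).trace - M.trace * N.trace) • 1 := by
  ext i j
  fin_cases i <;> fin_cases j <;>
    simp [mul_apply, trace, Fin.sum_univ_two] <;> ring

variable {e : Matrix (Fin 2) (Fin 2) R}

theorem eq_trace_smul_of_mul_eq_of_mul_eq (he : e.trace = 1) {N : Matrix (Fin 2) (Fin 2) R}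
    (hl : e * N = N) (hr : N * e = N) : N = N.trace • e := by
  have h := mul_add_mul_swap_fin_two e N
  rw [hl, hr, he, one_smul, one_mul, sub_self, zero_smul, add_zero] at h
  exact add_left_cancel h

theorem trace_mul_of_mul_eq_of_mul_eq (he : e.trace = 1) {M N : Matrix (Fin 2) (Fin 2) R}
    (hMl : e * M = M) (hMr : M * e = M) (hNl : e * N = N) :
    (M * N).trace = M.trace * N.trace := by
  calc (M * N).trace = (M.trace • (e * N)).trace := by
        rw [← smul_mul_assoc, ← eq_trace_smul_of_mul_eq_of_mul_eq he hMl hMr]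
    _ = M.trace * N.trace := by rw [hNl, trace_smul, smul_eq_mul]

theorem _root_.IsIdempotentElem.eq_zero_or_eq_one_or_trace_eq_one [IsLocalRing R]
    (he : IsIdempotentElem e) : e = 0 ∨ e = 1 ∨ e.trace = 1 := by
  have hdet : IsIdempotentElem e.det := by rw [IsIdempotentElem, ← det_mul, he.eq]
  rcases hdet.eq_zero_or_eq_one_of_isLocalRing with h0 | h1
  · have hscalar : e = e.trace • e := by simpa [he.eq, h0] using mul_self_fin_two e
    have htr : IsIdempotentElem e.trace := by
      have := congrArg trace hscalar
      rw [trace_smul, smul_eq_mul] at this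
      exact this.symm
    rcases htr.eq_zero_or_eq_one_of_isLocalRing with h | h
    · exact Or.inl (by rw [hscalar, h, zero_smul])
    · exact Or.inr (Or.inr h)
  · have hunit : IsUnit e := (isUnit_iff_isUnit_det e).2 (h1 ▸ isUnit_one)
    exact Or.inr (Or.inl ((IsIdempotentElem.iff_eq_one_of_isUnit hunit).1 he))

theorem trace_mem_jacobson_bot_of_memCornerJacobson (he : IsIdempotentElem e)
    (htr : e.trace = 1) {N : Matrix (Fin 2) (Fin 2) R} (hl : e * N = N)
    (hN : MemCornerJacobson e N) : N.trace ∈ Ideal.jacobson (⊥ : Ideal R) := by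
  refine Ideal.mem_jacobson_bot.2 fun y => ?_
  obtain ⟨s, hs, hsN, -⟩ := hN (-y • 1)
  obtain ⟨hsl, hsr⟩ := (Subsemigroup.mem_corner_iff he).1 ⟨s, hs⟩
  have hcorner : e - e * (-y • 1) * e * N = e + y • N := by
    simp [he.eq, hl]
  have hcorner_l : e * (e + y • N) = e + y • N := by rw [mul_add, he.eq, mul_smul_comm, hl]
  -- the trace is multiplicative on the corner ring, so `tr s * (1 + y * tr N) = tr e = 1`
  have h := congrArg trace hsN
  rw [hcorner, trace_mul_of_mul_eq_of_mul_eq htr hsl hsr hcorner_l, trace_add, trace_smul,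
    smul_eq_mul, htr] at h
  exact .of_mul_eq_one_right s.trace (by linear_combination h)

theorem isUnit_trace_of_isUnit_sub_of_trace_eq_one {A : Matrix (Fin 2) (Fin 2) R}
    (he : IsIdempotentElem e) (htr : e.trace = 1) (hu : IsUnit (A - e)) (hcomm : A * e = e * A)
    (hJ : MemCornerJacobson e (e * A * e)) : IsUnit A.trace := by
  obtain ⟨u, hu⟩ := hu
  have heA : Commute e A := hcomm.symm
  have hfu : Commute (1 - e) u := hu ▸ (Commute.one_left _).sub_left (heA.sub_right (.refl e))
  have hf : (1 - e).trace = 1 := by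
    rw [trace_sub, trace_one, htr]
    norm_num
  have corner {f : Matrix (Fin 2) (Fin 2) R} (hidem : IsIdempotentElem f) (x) :
      f * (f * x * f) = f * x * f ∧ f * x * f * f = f * x * f :=
    (Subsemigroup.mem_corner_iff hidem).1 ⟨x, rfl⟩
  have hJtr : (e * A * e).trace ∈ Ideal.jacobson (⊥ : Ideal R) :=
    trace_mem_jacobson_bot_of_memCornerJacobson he htr (corner he A).1 hJ
  obtain ⟨hul, hur⟩ := corner he.one_sub u
  have hunit : IsUnit ((1 - e) * u * (1 - e)).trace := by
    refine .of_mul_eq_one ((1 - e) * (u⁻¹ : (Matrix (Fin 2) (Fin 2) R)ˣ) * (1 - e)).trace ?_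
    rw [← trace_mul_of_mul_eq_of_mul_eq hf hul hur (corner he.one_sub _).1,
      he.one_sub.mul_mul_mul_mul_inv_mul hfu, hf]
  rw [← he.mul_mul_add_mul_sub_mul_of_commute heA, trace_add, ← hu]
  exact isUnit_add_of_mem_jacobson_bot hJtr hunit

end Matrix

theorem stmt11 {R : Type*} [CommRing R] [IsLocalRing R] (A : Matrix (Fin 2) (Fin 2) R)
    (h : IsStronglyRadClean A) :
    IsUnit A ∨ (∀ i j, A i j ∈ Ideal.jacobson (⊥ : Ideal R)) ∨ IsUnit A.trace := by
  obtain ⟨e, he, hu, hcomm, hJ⟩ := h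
  rcases he.eq_zero_or_eq_one_or_trace_eq_one with rfl | rfl | htr
  · exact Or.inl (by simpa using hu)
  · rw [one_mul, mul_one] at hJ
    exact Or.inr (Or.inl fun i j =>
      TwoSidedIdeal.mem_jacobson_bot_iff.1 (Matrix.apply_mem_jacobson_bot hJ.mem_jacobson_bot i j))
  · exact Or.inr (Or.inr (Matrix.isUnit_trace_of_isUnit_sub_of_trace_eq_one he htr hu hcomm hJ))
end

section
/- Let R be a commutative local ring such that for all λ ∈ J(R) and μ ∈ U(R) the equation x² + μx + λ = 0 is solvable in R. Then for all λ(x) ∈ J(R[[x]]) and μ(x) ∈ U(R[[x]]), the equation y² + μ(x)y + λ(x) = 0 has a solution y ∈ J(R[[x]]). -/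
/-!
A root of the reduced equation `a ^ 2 + μ₀ a + λ₀ = 0` over `R` can always be chosen in the
maximal ideal, because the two roots multiply to `λ₀ ∈ 𝔪`. Such a root is simple: the
derivative `2a + μ₀` is a unit since `μ₀` is. As `R⟦X⟧` is `(X)`-adically complete, hence
Henselian along `(X)`, Hensel's lemma lifts `a` to a root `y` with constant coefficient `a`,
and `y` is a nonunit.
-/

open Polynomial IsLocalRing

theorem IsLocalRing.exists_quadratic_root_mem_maximalIdeal {R : Type*} [CommRing R]
    [IsLocalRing R] {μ l x : R} (hl : l ∈ maximalIdeal R) (hx : x ^ 2 + μ * x + l = 0) :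
    ∃ a ∈ maximalIdeal R, a ^ 2 + μ * a + l = 0 := by
  have hprod : x * (x + μ) ∈ maximalIdeal R := by
    rw [show x * (x + μ) = -l by linear_combination hx]
    exact neg_mem hl
  rcases (maximalIdeal.isMaximal R).isPrime.mem_or_mem hprod with hx₀ | hxμ
  · exact ⟨x, hx₀, hx⟩
  · exact ⟨-(x + μ), neg_mem hxμ, by linear_combination hx⟩

theorem IsLocalRing.isUnit_add_of_mem_maximalIdeal {R : Type*} [CommRing R] [IsLocalRing R]
    {a u : R} (ha : a ∈ maximalIdeal R) (hu : IsUnit u) : IsUnit (a + u) := by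
  by_contra h
  have : u ∈ maximalIdeal R := by
    simpa using sub_mem ((mem_maximalIdeal _).mpr h) ha
  exact (mem_maximalIdeal _).mp this hu

namespace PowerSeries

theorem mem_maximalIdeal_iff {R : Type*} [CommRing R] [IsLocalRing R] {f : PowerSeries R} :
    f ∈ maximalIdeal (PowerSeries R) ↔ constantCoeff f ∈ maximalIdeal R := by
  simp only [mem_maximalIdeal, mem_nonunits_iff, isUnit_iff_constantCoeff]

theorem exists_isRoot_constantCoeff_eq {R : Type*} [CommRing R] {F : (PowerSeries R)[X]}
    (hF : F.Monic) {a : R} (ha : constantCoeff (F.eval (C a)) = 0)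
    (hF' : IsUnit (constantCoeff (F.derivative.eval (C a)))) :
    ∃ y, F.IsRoot y ∧ constantCoeff y = a := by
  have hmem : ∀ f : PowerSeries R, f ∈ Ideal.span {X} ↔ constantCoeff f = 0 := fun f => by
    rw [Ideal.mem_span_singleton, X_dvd_iff]
  obtain ⟨y, hy, hya⟩ := HenselianRing.is_henselian F hF (C a) ((hmem _).mpr ha)
    ((isUnit_iff_constantCoeff.mpr hF').map (Ideal.Quotient.mk _))
  rw [hmem, map_sub, constantCoeff_C, sub_eq_zero] at hya
  exact ⟨y, hy, hya⟩

theorem exists_quadratic_root_constantCoeff_eq {R : Type*} [CommRing R] {m l : PowerSeries R}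
    {a : R} (ha : a ^ 2 + constantCoeff m * a + constantCoeff l = 0)
    (ha' : IsUnit (2 * a + constantCoeff m)) :
    ∃ y, y ^ 2 + m * y + l = 0 ∧ constantCoeff y = a := by
  let F : (PowerSeries R)[X] := .X ^ 2 + (.C m * .X + .C l)
  have hF : F.Monic := monic_X_pow_add (degree_linear_le.trans_lt (by norm_num))
  have hFa : F.eval (C a) = C a ^ 2 + m * C a + l := by simp [F, add_assoc]
  have hF'a : F.derivative.eval (C a) = 2 * C a + m := by simp [F]; ring
  obtain ⟨y, hy, hya⟩ := exists_isRoot_constantCoeff_eq hF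
    (by rw [hFa]; simpa [mul_comm] using ha)
    (by rwa [hF'a, map_add, map_mul, constantCoeff_C, map_ofNat])
  refine ⟨y, ?_, hya⟩
  simpa [F, IsRoot, add_assoc] using hy

end PowerSeries

theorem stmt19 {R : Type*} [CommRing R] [IsLocalRing R]
    (h : ∀ lam ∈ Ideal.jacobson (⊥ : Ideal R), ∀ mu : R, IsUnit mu →
      ∃ x : R, x ^ 2 + mu * x + lam = 0)
    (l : PowerSeries R) (hl : l ∈ Ideal.jacobson (⊥ : Ideal (PowerSeries R)))
    (m : PowerSeries R) (hm : IsUnit m) :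
    ∃ y ∈ Ideal.jacobson (⊥ : Ideal (PowerSeries R)), y ^ 2 + m * y + l = 0 := by
  simp only [jacobson_eq_maximalIdeal ⊥ bot_ne_top] at h hl ⊢
  have hl₀ := PowerSeries.mem_maximalIdeal_iff.mp hl
  have hm₀ : IsUnit (PowerSeries.constantCoeff m) := hm.map _
  obtain ⟨x, hx⟩ := h _ hl₀ _ hm₀
  obtain ⟨a, ha, hax⟩ := exists_quadratic_root_mem_maximalIdeal hl₀ hx
  obtain ⟨y, hy, hya⟩ := PowerSeries.exists_quadratic_root_constantCoeff_eq hax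
    (isUnit_add_of_mem_maximalIdeal (Ideal.mul_mem_left _ 2 ha) hm₀)
  exact ⟨y, PowerSeries.mem_maximalIdeal_iff.mpr (hya ▸ ha), hy⟩
end
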